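/- Let G be an additive abelian group and let p, l₁, l₂ ∈ G satisfy 2·p = l₁ and suppose l₂ − l₁ has infinite order, i.e. for every integer n ≠ 0, n·(l₂ − l₁) ≠ 0. Define q : ℕ → G by q(0) = p and, for k ≥ 1, q(k) = l₂ − q(k−1) if k is odd and q(k) = l₁ − q(k−1) if k is even. Then: (i) q is injective, i.e. q(k) ≠ q(h) whenever k ≠ h; and (ii) for every k ≥ 1, 2·q(k) ≠ l₁ and 2·q(k) ≠ l₂. -/
import Mathlib


/-- Claim (3.9) in the proof of Lemma 3.6 (case `g ≤ 7`): if `2P ∼ L₁` and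
`L₂ − L₁` has infinite order, the points of the line chain are distinct and
none of them, except the starting point, is a ramification point of `|L₁|` or
`|L₂|`. -/
theorem stmt_6 {G : Type*} [AddCommGroup G] (p l₁ l₂ : G)
    (hp : (2 : ℤ) • p = l₁)
    (hord : ∀ n : ℤ, n ≠ 0 → n • (l₂ - l₁) ≠ 0)
    (q : ℕ → G) (h0 : q 0 = p)
    (hrec : ∀ k, 1 ≤ k → q k = (if Odd k then l₂ else l₁) - q (k - 1)) :
    (∀ k h : ℕ, k ≠ h → q k ≠ q h) ∧
    (∀ k : ℕ, 1 ≤ k → (2 : ℤ) • q k ≠ l₁ ∧ (2 : ℤ) • q k ≠ l₂) := by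
  -- closed form
  have key : ∀ m : ℕ, q (2 * m) = p - (m : ℤ) • (l₂ - l₁) ∧
      q (2 * m + 1) = (l₂ - p) + (m : ℤ) • (l₂ - l₁) := by
    intro m
    induction m with
    | zero =>
      constructor
      · simpa using h0
      · have h1 := hrec 1 (by norm_num)
        rw [if_pos (by decide : Odd 1)] at h1
        simp [h1, h0]
    | succ n ih =>
      have heven : q (2 * (n + 1)) = l₁ - q (2 * n + 1) := by
        have := hrec (2 * (n + 1)) (by omega)
        rw [if_neg (by simp [Nat.odd_iff, Nat.mul_add_mod]),
          show 2 * (n + 1) - 1 = 2 * n + 1 from by omega] at this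
        exact this
      have h2 : q (2 * (n + 1)) = p - ((n : ℤ) + 1) • (l₂ - l₁) := by
        rw [heven, ih.2]
        module
      constructor
      · rw [h2]; push_cast [add_smul, one_smul]; module
      · have hodd : q (2 * (n + 1) + 1) = l₂ - q (2 * (n + 1)) := by
          have := hrec (2 * (n + 1) + 1) (by omega)
          rw [if_pos (by simp [Nat.odd_iff, Nat.add_mul_mod_self_left])] at this
          simpa using this
        rw [hodd, h2]
        push_cast
        module
  have hD : ∀ n : ℤ, n • (l₂ - l₁) = 0 → n = 0 := by
    intro n hn
    by_contra hne
    exact hord n hne hn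
  constructor
  · intro k h hkh heq
    rcases Nat.even_or_odd k with ⟨a, rfl⟩ | ⟨a, rfl⟩ <;>
      rcases Nat.even_or_odd h with ⟨b, rfl⟩ | ⟨b, rfl⟩
    · rw [show a + a = 2 * a by ring, show b + b = 2 * b by ring,
        (key a).1, (key b).1] at heq
      have : ((a : ℤ) - b) • (l₂ - l₁) = 0 := by
        linear_combination (norm := module) -heq
      have := hD _ this
      omega
    · rw [show a + a = 2 * a by ring, (key a).1, (key b).2] at heq
      have : ((a : ℤ) + b + 1) • (l₂ - l₁) = 0 := by
        linear_combination (norm := module) hp - heq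
      have := hD _ this
      omega
    · rw [show b + b = 2 * b by ring, (key a).2, (key b).1] at heq
      have : ((a : ℤ) + b + 1) • (l₂ - l₁) = 0 := by
        linear_combination (norm := module) hp + heq
      have := hD _ this
      omega
    · rw [(key a).2, (key b).2] at heq
      have : ((a : ℤ) - b) • (l₂ - l₁) = 0 := by
        linear_combination (norm := module) heq
      have := hD _ this
      omega
  · intro k hk
    rcases Nat.even_or_odd k with ⟨a, rfl⟩ | ⟨a, rfl⟩
    · rw [show a + a = 2 * a by ring, (key a).1]
      constructor
      · intro heq
        have : ((2 : ℤ) * a) • (l₂ - l₁) = 0 := by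
          linear_combination (norm := module) hp - heq
        have := hD _ this
        omega
      · intro heq
        have : ((2 : ℤ) * a + 1) • (l₂ - l₁) = 0 := by
          linear_combination (norm := module) hp - heq
        have := hD _ this
        omega
    · rw [(key a).2]
      constructor
      · intro heq
        have : ((2 : ℤ) * a + 2) • (l₂ - l₁) = 0 := by
          linear_combination (norm := module) heq + hp
        have := hD _ this
        omega
      · intro heq
        have : ((2 : ℤ) * a + 1) • (l₂ - l₁) = 0 := by
          linear_combination (norm := module) heq + hp
        have := hD _ this
        omega
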